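/- Consider an N-player game where each strategy set K_i ⊆ ℝ^{n_i} is convex and each cost function f_i(·, x_{-i}) is continuously differentiable and strongly convex on K_i with constant η_i > 0 for every x_{-i} ∈ K_{-i} (i.e., f_i(y_i, x_{-i}) ≥ f_i(x_i, x_{-i}) + ⟨∇_{x_i} f_i(x_i, x_{-i}), y_i − x_i⟩ + (η_i/2)‖y_i − x_i‖² for all x_i, y_i ∈ K_i). Suppose there exists a differentiable function φ such that: (a) for every player i, all x_i, y_i ∈ K_i and x_{-i} ∈ K_{-i}, if ⟨∇_{x_i} f_i(x_i, x_{-i}), y_i − x_i⟩ < 0 then ⟨∇_{x_i} φ(x_i, x_{-i}), y_i − x_i⟩ ≤ ⟨∇_{x_i} f_i(x_i, x_{-i}), y_i − x_i⟩; and (b) φ has L-Lipschitz continuous gradient on K with L ≤ min_i η_i, so that φ(y) ≤ φ(x) + ⟨∇φ(x), y − x⟩ + (L/2)‖y − x‖² for all x, y ∈ K. Then the game is a generalized ordinal potential game with generalized ordinal potential function φ. -/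

import Mathlib

/-! If player `i`'s deviation `d` lowers `f i`, strong convexity makes
`⟪∇ᵢ f i, d⟫ + η i / 2 * ‖d‖ ^ 2` negative, so in particular `⟪∇ᵢ f i, d⟫ < 0` and (a) applies.
The descent inequality (b) for the one-block deviation bounds the change of `φ` by
`⟪∇ᵢ φ, d⟫ + L / 2 * ‖d‖ ^ 2`, which by (a) and `L ≤ η i` is at most that negative quantity. -/

noncomputable section

/-- The set of joint strategy profiles of a game with strategy sets `K i ⊆ ℝ^{n i}`. -/
def jointK {N : ℕ} {n : Fin N → ℕ}
    (K : ∀ i, Set (EuclideanSpace ℝ (Fin (n i)))) :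
    Set (∀ i, EuclideanSpace ℝ (Fin (n i))) :=
  {x | ∀ i, x i ∈ K i}

open RealInnerProductSpace

/-- The partial gradient of `g` with respect to player `i`'s variable, at `x`. -/
noncomputable def blockGrad {N : ℕ} {n : Fin N → ℕ}
    (g : (∀ k, EuclideanSpace ℝ (Fin (n k))) → ℝ)
    (x : ∀ k, EuclideanSpace ℝ (Fin (n k))) (i : Fin N) :
    EuclideanSpace ℝ (Fin (n i)) :=
  gradient (fun v => g (Function.update x i v)) (x i)

/-- `φ` is a generalized ordinal potential function for the game `(K, f)`. -/
def IsGenOrdinalPotential {N : ℕ} {n : Fin N → ℕ}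
    (K : ∀ i, Set (EuclideanSpace ℝ (Fin (n i))))
    (f : Fin N → (∀ i, EuclideanSpace ℝ (Fin (n i))) → ℝ)
    (φ : (∀ i, EuclideanSpace ℝ (Fin (n i))) → ℝ) : Prop :=
  ∀ i : Fin N, ∀ x ∈ jointK K, ∀ xi' ∈ K i,
    f i (Function.update x i xi') - f i x < 0 →
      φ (Function.update x i xi') - φ x < 0

theorem Fintype.sum_update_sub {ι M : Type*} [Fintype ι] [DecidableEq ι] {E : ι → Type*}
    [∀ j, AddGroup (E j)] [AddCommMonoid M] (F : ∀ j, E j → M) (hF : ∀ j, F j 0 = 0)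
    (x : ∀ j, E j) (i : ι) (v : E i) :
    ∑ j, F j (Function.update x i v j - x j) = F i (v - x i) := by
  rw [Fintype.sum_eq_single i fun j hj => by rw [Function.update_of_ne hj, sub_self, hF],
    Function.update_self]

section Game

variable {N : ℕ} {n : Fin N → ℕ} {K : ∀ i, Set (EuclideanSpace ℝ (Fin (n i)))}

theorem update_mem_jointK {x : ∀ i, EuclideanSpace ℝ (Fin (n i))} (hx : x ∈ jointK K)
    {i : Fin N} {v : EuclideanSpace ℝ (Fin (n i))} (hv : v ∈ K i) :
    Function.update x i v ∈ jointK K := fun j => by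
  rcases eq_or_ne j i with rfl | hj
  · simpa using hv
  · simpa [Function.update_of_ne hj] using hx j

theorem le_add_inner_blockGrad_of_descent {φ : (∀ i, EuclideanSpace ℝ (Fin (n i))) → ℝ} {L : ℝ}
    (hb : ∀ x ∈ jointK K, ∀ y ∈ jointK K,
      φ y ≤ φ x + (∑ i, ⟪blockGrad φ x i, y i - x i⟫) + L / 2 * ∑ i, ‖y i - x i‖ ^ 2)
    {x : ∀ i, EuclideanSpace ℝ (Fin (n i))} (hx : x ∈ jointK K)
    {i : Fin N} {v : EuclideanSpace ℝ (Fin (n i))} (hv : v ∈ K i) :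
    φ (Function.update x i v) ≤ φ x + ⟪blockGrad φ x i, v - x i⟫ + L / 2 * ‖v - x i‖ ^ 2 := by
  have h := hb x hx _ (update_mem_jointK hx hv)
  rwa [Fintype.sum_update_sub (fun j w => ⟪blockGrad φ x j, w⟫) (fun _ => inner_zero_right _),
    Fintype.sum_update_sub (fun _ w => ‖w‖ ^ 2) (fun _ => by simp)] at h

end Game

theorem stmt13_general {N : ℕ} {n : Fin N → ℕ}
    (K : ∀ i, Set (EuclideanSpace ℝ (Fin (n i))))
    (f : Fin N → (∀ i, EuclideanSpace ℝ (Fin (n i))) → ℝ)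
    (η : Fin N → ℝ) (hη : ∀ i, 0 < η i)
    (hstrong : ∀ i : Fin N, ∀ x ∈ jointK K, ∀ yi ∈ K i,
      f i (Function.update x i yi) ≥
        f i x + ⟪blockGrad (f i) x i, yi - x i⟫ + η i / 2 * ‖yi - x i‖ ^ 2)
    (φ : (∀ i, EuclideanSpace ℝ (Fin (n i))) → ℝ)
    (L : ℝ) (hLη : ∀ i, L ≤ η i)
    (ha : ∀ i : Fin N, ∀ x ∈ jointK K, ∀ yi ∈ K i,
      ⟪blockGrad (f i) x i, yi - x i⟫ < 0 →
        ⟪blockGrad φ x i, yi - x i⟫ ≤ ⟪blockGrad (f i) x i, yi - x i⟫)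
    (hb : ∀ x ∈ jointK K, ∀ y ∈ jointK K,
      φ y ≤ φ x + (∑ i, ⟪blockGrad φ x i, y i - x i⟫)
        + L / 2 * ∑ i, ‖y i - x i‖ ^ 2) :
    IsGenOrdinalPotential K f φ := by
  intro i x hx v hv hf
  have hstrong_i := hstrong i x hx v hv
  have hf_inner : ⟪blockGrad (f i) x i, v - x i⟫ < 0 := by
    have : 0 ≤ η i / 2 * ‖v - x i‖ ^ 2 := by have := hη i; positivity
    linarith
  calc φ (Function.update x i v) - φ x
      ≤ ⟪blockGrad φ x i, v - x i⟫ + L / 2 * ‖v - x i‖ ^ 2 := by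
        linarith [le_add_inner_blockGrad_of_descent hb hx hv]
    _ ≤ ⟪blockGrad (f i) x i, v - x i⟫ + η i / 2 * ‖v - x i‖ ^ 2 := by
        gcongr
        exacts [ha i x hx v hv hf_inner, hLη i]
    _ ≤ f i (Function.update x i v) - f i x := by linarith
    _ < 0 := hf

/-- In a game with convex strategy sets and costs that are continuously
differentiable and `η i`-strongly convex in each player's own variable, if a
differentiable `φ` satisfies (a) the partial-gradient domination condition along
improving directions and (b) the `L`-descent inequality on `K` with `L ≤ min_i η i`,
then `φ` is a generalized ordinal potential function of the game. -/
theorem stmt13 {N : ℕ} {n : Fin N → ℕ}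
    (K : ∀ i, Set (EuclideanSpace ℝ (Fin (n i))))
    (f : Fin N → (∀ i, EuclideanSpace ℝ (Fin (n i))) → ℝ)
    (hKconv : ∀ i, Convex ℝ (K i))
    (η : Fin N → ℝ) (hη : ∀ i, 0 < η i)
    (hfC1 : ∀ (i : Fin N) (x : ∀ k, EuclideanSpace ℝ (Fin (n k))),
      ContDiffOn ℝ 1 (fun v => f i (Function.update x i v)) (K i))
    (hstrong : ∀ i : Fin N, ∀ x ∈ jointK K, ∀ yi ∈ K i,
      f i (Function.update x i yi) ≥
        f i x + ⟪blockGrad (f i) x i, yi - x i⟫ + η i / 2 * ‖yi - x i‖ ^ 2)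
    (φ : (∀ i, EuclideanSpace ℝ (Fin (n i))) → ℝ)
    (hφdiff : Differentiable ℝ φ)
    (L : ℝ) (hL : 0 < L) (hLη : ∀ i, L ≤ η i)
    (ha : ∀ i : Fin N, ∀ x ∈ jointK K, ∀ yi ∈ K i,
      ⟪blockGrad (f i) x i, yi - x i⟫ < 0 →
        ⟪blockGrad φ x i, yi - x i⟫ ≤ ⟪blockGrad (f i) x i, yi - x i⟫)
    (hb : ∀ x ∈ jointK K, ∀ y ∈ jointK K,
      φ y ≤ φ x + (∑ i, ⟪blockGrad φ x i, y i - x i⟫)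
        + L / 2 * ∑ i, ‖y i - x i‖ ^ 2) :
    IsGenOrdinalPotential K f φ :=
  stmt13_general K f η hη hstrong φ L hLη ha hb
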